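/- Let p, q be coprime positive integers and let a₀ > 0 satisfy 0 < a₀^{-2} < 1/q. Then the set N(a₀) = {(j,k,l) ∈ (ℤ² \ {(0,0)}) × {0,1} : λ_{j,k,l}(a₀) = 0} of lattice points corresponding to zero eigenvalues is finite. -/

import Mathlib

/-!
The set is in fact empty. For `k = 0` the eigenvalue is
`(pj/q)²`. For `k ≠ 0`, multiplying by `q²` turns `λ = 0` into `(pj)² = (qk²)² + ε` with
`0 < |ε| = q² a⁻² k² < qk²`; but integer squares `m² ≠ n²` differ by at least
`|m| + |n|`, which forces `|ε| ≥ qk²`.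
-/

/-- The eigenvalue `λ_{j,k,l}(a) = (pj/q)² − k⁴ + (−1)^l a^{-2} k²`. -/
noncomputable def lam (p q : ℕ) (a : ℝ) (j k : ℤ) (l : Fin 2) : ℝ :=
  ((p : ℝ) * j / q) ^ 2 - (k : ℝ) ^ 4 + (-1) ^ (l : ℕ) * a⁻¹ ^ 2 * (k : ℝ) ^ 2

theorem Int.abs_add_abs_le_abs_sq_sub_sq {m n : ℤ} (h : |m| ≠ |n|) :
    |m| + |n| ≤ |m ^ 2 - n ^ 2| := by
  have hfactor : m ^ 2 - n ^ 2 = (|m| - |n|) * (|m| + |n|) := by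
    rw [← sq_abs m, ← sq_abs n]; ring
  rw [hfactor, abs_mul, abs_of_nonneg (by positivity : 0 ≤ |m| + |n|)]
  exact le_mul_of_one_le_left (by positivity) (Int.one_le_abs (sub_ne_zero.mpr h))

theorem Int.cast_sq_ne_sq_add {m n : ℤ} {ε : ℝ} (hε : ε ≠ 0) (hεn : |ε| < |(n : ℝ)|) :
    (m : ℝ) ^ 2 ≠ (n : ℝ) ^ 2 + ε := by
  intro h
  have hεeq : ε = ((m ^ 2 - n ^ 2 : ℤ) : ℝ) := by push_cast; linarith
  have hmn : |m| ≠ |n| := by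
    intro habs
    rw [← sq_eq_sq_iff_abs_eq_abs, ← sub_eq_zero] at habs
    exact hε (by rw [hεeq, habs, Int.cast_zero])
  have hbound : ((|n| : ℤ) : ℝ) ≤ |ε| := by
    rw [hεeq, ← Int.cast_abs, Int.cast_le]
    linarith [Int.abs_add_abs_le_abs_sq_sub_sq hmn, abs_nonneg m]
  rw [Int.cast_abs] at hbound
  linarith

theorem lam_zero_ne_zero {p q : ℕ} (hp : 0 < p) (hq : 0 < q) (a : ℝ) {j : ℤ} (hj : j ≠ 0)
    (l : Fin 2) : lam p q a j 0 l ≠ 0 := by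
  simp [lam, hp.ne', hq.ne', hj]

theorem sq_mul_lam (p q : ℕ) (a : ℝ) (j k : ℤ) (l : Fin 2) (hq : q ≠ 0) :
    (q : ℝ) ^ 2 * lam p q a j k l =
      (((p * j : ℤ)) : ℝ) ^ 2 - (((q * k ^ 2 : ℤ)) : ℝ) ^ 2
        + (-1) ^ (l : ℕ) * q ^ 2 * a⁻¹ ^ 2 * (k : ℝ) ^ 2 := by
  simp only [lam]
  push_cast
  field_simp

theorem lam_ne_zero {p q : ℕ} (hq : 0 < q) {a : ℝ} (ha : 0 < a⁻¹ ^ 2) (haq : a⁻¹ ^ 2 < 1 / q)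
    (j : ℤ) {k : ℤ} (hk : k ≠ 0) (l : Fin 2) : lam p q a j k l ≠ 0 := by
  intro hlam
  have hqR : (0 : ℝ) < q := by exact_mod_cast hq
  have hk2 : (0 : ℝ) < (k : ℝ) ^ 2 := by positivity
  set ε : ℝ := -((-1) ^ (l : ℕ) * q ^ 2 * a⁻¹ ^ 2 * (k : ℝ) ^ 2)
  have hεabs : |ε| = q ^ 2 * a⁻¹ ^ 2 * (k : ℝ) ^ 2 := by
    simp only [ε, abs_neg, abs_mul, abs_pow, abs_one, one_pow, one_mul]
    rw [abs_of_pos hqR, ← abs_pow, abs_of_pos ha, ← abs_pow, abs_of_pos hk2]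
  have hεlt : |ε| < |(((q * k ^ 2 : ℤ)) : ℝ)| := by
    have hqa : (q : ℝ) * a⁻¹ ^ 2 < 1 := by rwa [lt_div_iff₀ hqR, mul_comm] at haq
    rw [hεabs, abs_of_pos (by push_cast; positivity)]
    push_cast
    nlinarith [mul_pos hqR hk2]
  have hεne : ε ≠ 0 := by
    rw [← abs_pos, hεabs]; positivity
  refine Int.cast_sq_ne_sq_add hεne hεlt (m := p * j) ?_
  have := sq_mul_lam p q a j k l hq.ne'
  rw [hlam, mul_zero] at this
  linarith

theorem stmt8_general (p q : ℕ) (hp : 0 < p) (hq : 0 < q)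
    (a₀ : ℝ) (h1 : 0 < a₀⁻¹ ^ 2) (h2 : a₀⁻¹ ^ 2 < 1 / q) :
    Set.Finite {x : (ℤ × ℤ) × Fin 2 |
      x.1 ≠ (0, 0) ∧ lam p q a₀ x.1.1 x.1.2 x.2 = 0} := by
  refine Set.finite_empty.subset ?_
  rintro ⟨⟨j, k⟩, l⟩ ⟨hjk, hlam⟩
  rcases eq_or_ne k 0 with rfl | hk
  · exact lam_zero_ne_zero hp hq a₀ (by simpa using hjk) l hlam
  · exact lam_ne_zero hq h1 h2 j hk l hlam

theorem stmt8 (p q : ℕ) (hp : 0 < p) (hq : 0 < q) (hpq : Nat.Coprime p q)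
    (a₀ : ℝ) (ha₀ : 0 < a₀) (h1 : 0 < a₀⁻¹ ^ 2) (h2 : a₀⁻¹ ^ 2 < 1 / q) :
    Set.Finite {x : (ℤ × ℤ) × Fin 2 |
      x.1 ≠ (0, 0) ∧ lam p q a₀ x.1.1 x.1.2 x.2 = 0} :=
  stmt8_general p q hp hq a₀ h1 h2
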